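/- arXiv:2105.02642 — 5 statements merged into one kernel-verified Lean document; each statement's English description precedes it below -/
import Mathlib

section
/- Let X be a T1 topological space without isolated points and let f : X → X be continuous. If there exists a point x₀ ∈ X whose forward orbit {f^[n] x₀ : n ∈ ℕ} is dense in X, then f is topologically transitive: for all nonempty open sets U, V ⊆ X there exists n ∈ ℕ such that f^[n] '' U ∩ V ≠ ∅. -/
/-! The orbit meets `U` at some `f^[m] x₀`. Removing the finitely many points `f^[k] x₀`, `k < m`,
from a dense set leaves it dense, because the space is T1 without isolated points; so the tail
`{f^[n + m] x₀}` is dense and meets `V`, and `f^[n + m] x₀ = f^[n] (f^[m] x₀) ∈ f^[n] '' U`. -/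

open Set Filter Topology

lemma nhdsNE_neBot_of_interior_singleton_eq_empty {X : Type*} [TopologicalSpace X] {x : X}
    (h : interior ({x} : Set X) = ∅) : (𝓝[≠] x).NeBot := by
  rw [neBot_iff, Ne, ← isOpen_singleton_iff_punctured_nhds]
  intro hx
  simp [hx.interior_eq] at h

lemma Dense.range_shift {X : Type*} [TopologicalSpace X] [T1Space X] [∀ x : X, (𝓝[≠] x).NeBot]
    {u : ℕ → X} (hu : Dense (range u)) (m : ℕ) : Dense (range fun n => u (n + m)) :=
  (hu.sdiff_finite ((finite_Iio m).image u)).mono <| by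
    rintro _ ⟨⟨n, rfl⟩, hn⟩
    have hmn : m ≤ n := not_lt.1 fun h => hn ⟨n, h, rfl⟩
    exact ⟨n - m, congrArg u (Nat.sub_add_cancel hmn)⟩

theorem dense_orbit_implies_transitive_general {X : Type*} [TopologicalSpace X] [T1Space X]
    (hperf : ∀ x : X, interior ({x} : Set X) = ∅)
    (f : X → X)
    (x₀ : X) (hx₀ : Dense (Set.range fun n : ℕ => f^[n] x₀)) :
    ∀ U V : Set X, IsOpen U → IsOpen V → U.Nonempty → V.Nonempty →
      ∃ n : ℕ, (f^[n] '' U ∩ V).Nonempty := by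
  intro U V hU hV hUne hVne
  have := fun x => nhdsNE_neBot_of_interior_singleton_eq_empty (hperf x)
  obtain ⟨_, ⟨m, rfl⟩, hmU⟩ := hx₀.exists_mem_open hU hUne
  obtain ⟨_, ⟨n, rfl⟩, hnV⟩ := (hx₀.range_shift m).exists_mem_open hV hVne
  exact ⟨n, _, ⟨f^[m] x₀, hmU, (Function.iterate_add_apply f n m x₀).symm⟩, hnV⟩

/-- Proposition 2.1, (1) ⟹ (2): on a T1 space without isolated points, a continuous
map with a dense forward orbit is topologically transitive. -/
theorem dense_orbit_implies_transitive {X : Type*} [TopologicalSpace X] [T1Space X]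
    (hperf : ∀ x : X, interior ({x} : Set X) = ∅)
    (f : X → X) (hf : Continuous f)
    (x₀ : X) (hx₀ : Dense (Set.range fun n : ℕ => f^[n] x₀)) :
    ∀ U V : Set X, IsOpen U → IsOpen V → U.Nonempty → V.Nonempty →
      ∃ n : ℕ, (f^[n] '' U ∩ V).Nonempty :=
  dense_orbit_implies_transitive_general hperf f x₀ hx₀
end

section
/- Under the skew-product hypotheses below, for every k ∈ ℕ and every word w = (w₁, …, w_k) ∈ {1,2}^k, the set M₁ × {g_w a₁} is contained in the image f^[k+1] '' (U × {a₁}), where g_w = g_{w_k} ∘ ⋯ ∘ g_{w₁}. -/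
/-- The composition `g_w = g_{w_k} ∘ ⋯ ∘ g_{w₁}` associated with a finite word
`w = (w₁, …, w_k)` in the alphabet `{1, 2}` (here `false` codes `1` and `true` codes `2`):
the first letter of the list is applied first. -/
def wordMap {M₂ : Type*} (g₁ g₂ : M₂ → M₂) (w : List Bool) (y : M₂) : M₂ :=
  w.foldl (fun z b => if b then g₂ z else g₁ z) y

/-!
Each fibre `M₁ × {y}` is carried by `f` onto the whole fibre `M₁ × {gᵢ y}`, already from its
part over the set where `f` acts by `gᵢ`, because `F` maps that set onto `M₁`. Reading the word
letter by letter, `M₁ × {g_w a₁}` is thus reached after `|w|` steps from `M₁ × {g₁ a₁}`, and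
this fibre is the image of `U × {a₁}` since `a₁` is fixed by `g₁`.
-/

open Set

theorem wordMap_append_singleton {M₂ : Type*} (g₁ g₂ : M₂ → M₂) (w : List Bool) (b : Bool)
    (y : M₂) :
    wordMap g₁ g₂ (w ++ [b]) y = (if b then g₂ else g₁) (wordMap g₁ g₂ w y) := by
  cases b <;> simp [wordMap]

theorem univ_prod_singleton_subset_image_prod_singleton {M₁ M₂ : Type*} {F : M₁ → M₁}
    {h : M₁ × M₂ → M₂} {f : M₁ × M₂ → M₁ × M₂} (hf : ∀ x y, f (x, y) = (F x, h (x, y)))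
    {W : Set M₁} (hFW : F '' W = univ) {g : M₂ → M₂} (hhW : ∀ x ∈ W, ∀ y, h (x, y) = g y)
    (y : M₂) :
    univ ×ˢ {g y} ⊆ f '' (W ×ˢ {y}) := by
  rintro ⟨x, _⟩ ⟨-, rfl⟩
  obtain ⟨u, hu, rfl⟩ : x ∈ F '' W := hFW ▸ mem_univ x
  exact ⟨(u, y), ⟨hu, rfl⟩, by rw [hf, hhW u hu]⟩

theorem univ_prod_word_subset_iterate_image_general
    {M₁ M₂ : Type*}
    (F : M₁ → M₁)
    (U V : Set M₁)
    (hFU : F '' U = Set.univ) (hFV : F '' V = Set.univ)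
    (g₁ g₂ : M₂ → M₂)
    (a₁ : M₂) (ha₁ : g₁ a₁ = a₁)
    (h : M₁ × M₂ → M₂)
    (f : M₁ × M₂ → M₁ × M₂) (hf : ∀ x y, f (x, y) = (F x, h (x, y)))
    (hhU : ∀ x ∈ U, ∀ y : M₂, h (x, y) = g₁ y)
    (hhV : ∀ x ∈ V, ∀ y : M₂, h (x, y) = g₂ y) :
    ∀ w : List Bool,
      (Set.univ ×ˢ ({wordMap g₁ g₂ w a₁} : Set M₂)) ⊆
        f^[w.length + 1] '' (U ×ˢ ({a₁} : Set M₂)) := by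
  have step : ∀ (b : Bool) (y : M₂),
      univ ×ˢ {(if b then g₂ else g₁) y} ⊆ f '' (univ ×ˢ {y}) := by
    rintro (_ | _) y
    · exact (univ_prod_singleton_subset_image_prod_singleton hf hFU hhU y).trans
        (image_mono (prod_mono (subset_univ U) le_rfl))
    · exact (univ_prod_singleton_subset_image_prod_singleton hf hFV hhV y).trans
        (image_mono (prod_mono (subset_univ V) le_rfl))
  intro w
  induction w using List.reverseRecOn with
  | nil =>
    simpa [wordMap, ha₁] using univ_prod_singleton_subset_image_prod_singleton hf hFU hhU a₁
  | append_singleton t b ih =>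
    calc univ ×ˢ {wordMap g₁ g₂ (t ++ [b]) a₁}
        ⊆ f '' (univ ×ˢ {wordMap g₁ g₂ t a₁}) := by
          rw [wordMap_append_singleton]; exact step b _
      _ ⊆ f '' (f^[t.length + 1] '' (U ×ˢ {a₁})) := image_mono ih
      _ = f^[(t ++ [b]).length + 1] '' (U ×ˢ {a₁}) := by
          rw [← image_comp, ← Function.iterate_succ', List.length_append, List.length_singleton]

/-- Key inclusion in the proof of Lemma 3.1: for every word `w` of length `k` in `{1,2}`,
`M₁ × {g_w a₁} ⊆ f^[k+1] '' (U × {a₁})`. -/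
theorem univ_prod_word_subset_iterate_image
    {M₁ M₂ : Type*} [TopologicalSpace M₁] [TopologicalSpace M₂]
    (F : M₁ → M₁) (hF : Continuous F)
    (U V : Set M₁) (hUopen : IsOpen U) (hVopen : IsOpen V)
    (hUne : U.Nonempty) (hVne : V.Nonempty) (hUV : Disjoint U V)
    (hFU : F '' U = Set.univ) (hFV : F '' V = Set.univ)
    (g₁ g₂ : M₂ → M₂) (hg₁ : Continuous g₁) (hg₂ : Continuous g₂)
    (a₁ : M₂) (ha₁ : g₁ a₁ = a₁)
    (h : M₁ × M₂ → M₂) (hh : Continuous h)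
    (f : M₁ × M₂ → M₁ × M₂) (hf : ∀ x y, f (x, y) = (F x, h (x, y)))
    (hhU : ∀ x ∈ U, ∀ y : M₂, h (x, y) = g₁ y)
    (hhV : ∀ x ∈ V, ∀ y : M₂, h (x, y) = g₂ y) :
    ∀ w : List Bool,
      (Set.univ ×ˢ ({wordMap g₁ g₂ w a₁} : Set M₂)) ⊆
        f^[w.length + 1] '' (U ×ˢ ({a₁} : Set M₂)) :=
  univ_prod_word_subset_iterate_image_general F U V hFU hFV g₁ g₂ a₁ ha₁ h f hf hhU hhV
end

section
/- Under the skew-product hypotheses below, if additionally the semigroup orbit {g_w a₁ : w a finite word in {1,2}} of a₁ is dense in M₂, then the union ⋃_{n ∈ ℕ} f^[n] '' (U × {a₁}) is dense in M₁ × M₂. -/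
/-- Lemma 3.1 (density of the unstable set): if the semigroup orbit of `a₁` under the
IFS generated by `{g₁, g₂}` is dense in `M₂`, then `⋃ n, f^[n] '' (U × {a₁})` is dense
in `M₁ × M₂`. -/
theorem unstable_set_dense
    {M₁ M₂ : Type*} [TopologicalSpace M₁] [TopologicalSpace M₂]
    (F : M₁ → M₁) (hF : Continuous F)
    (U V : Set M₁) (hUopen : IsOpen U) (hVopen : IsOpen V)
    (hUne : U.Nonempty) (hVne : V.Nonempty) (hUV : Disjoint U V)
    (hFU : F '' U = Set.univ) (hFV : F '' V = Set.univ)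
    (g₁ g₂ : M₂ → M₂) (hg₁ : Continuous g₁) (hg₂ : Continuous g₂)
    (a₁ : M₂) (ha₁ : g₁ a₁ = a₁)
    (h : M₁ × M₂ → M₂) (hh : Continuous h)
    (f : M₁ × M₂ → M₁ × M₂) (hf : ∀ x y, f (x, y) = (F x, h (x, y)))
    (hhU : ∀ x ∈ U, ∀ y : M₂, h (x, y) = g₁ y)
    (hhV : ∀ x ∈ V, ∀ y : M₂, h (x, y) = g₂ y)
    (horbit : Dense {z : M₂ | ∃ w : List Bool, wordMap g₁ g₂ w a₁ = z}) :
    Dense (⋃ n : ℕ, f^[n] '' (U ×ˢ ({a₁} : Set M₂))) := by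
  -- Key construction: for any word `w` and target `a : M₁`, there is `x ∈ U` with
  -- `f^[|w|+1] (x, a₁) = (a, wordMap g₁ g₂ w a₁)`.
  have key : ∀ (w : List Bool) (a : M₁),
      ∃ x ∈ U, f^[w.length + 1] (x, a₁) = (a, wordMap g₁ g₂ w a₁) := by
    intro w
    induction w using List.reverseRecOn with
    | nil =>
      intro a
      have ha : a ∈ F '' U := by rw [hFU]; trivial
      obtain ⟨x, hxU, hxa⟩ := ha
      refine ⟨x, hxU, ?_⟩
      simp only [List.length_nil, zero_add, Function.iterate_one]
      rw [hf, hhU x hxU, ha₁, hxa]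
      rfl
    | append_singleton w' b ih =>
      intro a
      have ha : ∃ a' ∈ (if b then V else U), F a' = a := by
        cases b
        · simpa using (by rw [hFU]; trivial : a ∈ F '' U)
        · simpa using (by rw [hFV]; trivial : a ∈ F '' V)
      obtain ⟨a', ha'mem, ha'F⟩ := ha
      obtain ⟨x, hxU, hx⟩ := ih a'
      refine ⟨x, hxU, ?_⟩
      have hlen : (w' ++ [b]).length + 1 = (w'.length + 1) + 1 := by simp
      rw [hlen, Function.iterate_succ_apply', hx, hf]
      have hword : wordMap g₁ g₂ (w' ++ [b]) a₁ =
          (if b then g₂ (wordMap g₁ g₂ w' a₁) else g₁ (wordMap g₁ g₂ w' a₁)) := by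
        simp [wordMap, List.foldl_append]
      cases b
      · simp only [if_neg Bool.false_ne_true] at ha'mem ⊢
        rw [hhU a' ha'mem, ha'F, hword]
        simp
      · simp only [if_pos rfl] at ha'mem ⊢
        rw [hhV a' ha'mem, ha'F, hword]
        simp
  rw [dense_iff_inter_open]
  rintro W hWopen ⟨⟨x₀, y₀⟩, hzW⟩
  obtain ⟨A, B, hAopen, hBopen, hx₀A, hy₀B, hAB⟩ :=
    isOpen_prod_iff.1 hWopen x₀ y₀ hzW
  obtain ⟨z, hzB, w, hw⟩ := horbit.inter_open_nonempty B hBopen ⟨y₀, hy₀B⟩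
  obtain ⟨x, hxU, hx⟩ := key w x₀
  refine ⟨f^[w.length + 1] (x, a₁), ?_, Set.mem_iUnion.2 ⟨w.length + 1,
    Set.mem_image_of_mem _ (by simp [hxU])⟩⟩
  apply hAB
  rw [hx, hw]
  exact ⟨hx₀A, hzB⟩
end

section
/- Let m ∈ ℕ, let F : EuclideanSpace ℝ (Fin m) → EuclideanSpace ℝ (Fin m), let φ, ψ : ℝ → ℝ, and let x₀ ∈ EuclideanSpace ℝ (Fin m), t₀ ∈ ℝ. Assume F is differentiable at x₀, φ is differentiable at t₀, and ψ is differentiable at ‖x₀‖². Define G : EuclideanSpace ℝ (Fin m) × ℝ → EuclideanSpace ℝ (Fin m) × ℝ by G (x, t) = (F x, t − φ t · ψ (‖x‖²)). Then G is differentiable at (x₀, t₀) and the determinant of its total derivative satisfies det (fderiv ℝ G (x₀, t₀)) = det (fderiv ℝ F x₀) · (1 − deriv φ t₀ · ψ (‖x₀‖²)). -/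
/-!
The derivative of `G` at `(x₀, t₀)` is `(x, t) ↦ (A x, f x + c t)` with `A = DF(x₀)`,
`f = -φ(t₀) · D(ψ ∘ ‖·‖²)(x₀)` and `c = 1 - φ'(t₀) ψ(‖x₀‖²)`. Such a block lower-triangular map
factors as `(A × id) ∘ τ ∘ (id × c)` with `τ (x, s) = (x, s + f x)` a transvection of
determinant `1`, so its determinant is `det A · c`.
-/

open ContinuousLinearMap

theorem LinearMap.det_prod_comp_fst_add_smul_snd {R M : Type*} [CommRing R] [AddCommGroup M]
    [Module R M] [Module.Free R M] [Module.Finite R M]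
    (A : M →ₗ[R] M) (f : M →ₗ[R] R) (c : R) :
    ((A ∘ₗ fst R M R).prod (f ∘ₗ fst R M R + c • snd R M R)).det = A.det * c := by
  have hfactor : (A ∘ₗ fst R M R).prod (f ∘ₗ fst R M R + c • snd R M R) =
      A.prodMap LinearMap.id ∘ₗ transvection (f ∘ₗ fst R M R) (0, 1) ∘ₗ
        LinearMap.id.prodMap (c • LinearMap.id) := by
    ext <;> simp [transvection.apply, add_comm]
  rw [hfactor, det_comp, det_comp, det_prodMap, det_prodMap, transvection.det]
  simp

theorem hasFDerivAt_snd_sub_mul_comp_fst {𝕜 E : Type*} [NontriviallyNormedField 𝕜]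
    [NormedAddCommGroup E] [NormedSpace 𝕜 E] {g : E → 𝕜} {g' : E →L[𝕜] 𝕜} {φ : 𝕜 → 𝕜} {φ' : 𝕜}
    {x : E} {t : 𝕜} (hg : HasFDerivAt g g' x) (hφ : HasDerivAt φ φ' t) :
    HasFDerivAt (fun p : E × 𝕜 => p.2 - φ p.2 * g p.1)
      ((-φ t • g').comp (fst 𝕜 E 𝕜) + (1 - φ' * g x) • snd 𝕜 E 𝕜) (x, t) := by
  have hφ_snd : HasFDerivAt (fun p : E × 𝕜 => φ p.2) (φ' • snd 𝕜 E 𝕜) (x, t) :=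
    hφ.comp_hasFDerivAt (x, t) hasFDerivAt_snd
  have hg_fst : HasFDerivAt (fun p : E × 𝕜 => g p.1) (g'.comp (fst 𝕜 E 𝕜)) (x, t) :=
    hg.comp (x, t) hasFDerivAt_fst
  refine (hasFDerivAt_snd.sub (hφ_snd.mul hg_fst)).congr_fderiv (ext fun p => ?_)
  simp only [sub_apply, add_apply, smul_apply, comp_apply, coe_fst', coe_snd', smul_eq_mul]
  ring

/-- Jacobian determinant computation underlying Lemma 4.2: the perturbation
`G (x, t) = (F x, t − φ t · ψ (‖x‖²))` is differentiable and its Jacobian determinant is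
`det D F(x₀) · (1 − φ'(t₀) · ψ(‖x₀‖²))` (the Jacobian matrix is block lower-triangular). -/
theorem det_fderiv_perturbation {m : ℕ}
    (F : EuclideanSpace ℝ (Fin m) → EuclideanSpace ℝ (Fin m))
    (φ ψ : ℝ → ℝ) (x₀ : EuclideanSpace ℝ (Fin m)) (t₀ : ℝ)
    (hF : DifferentiableAt ℝ F x₀) (hφ : DifferentiableAt ℝ φ t₀)
    (hψ : DifferentiableAt ℝ ψ (‖x₀‖ ^ 2))
    (G : EuclideanSpace ℝ (Fin m) × ℝ → EuclideanSpace ℝ (Fin m) × ℝ)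
    (hG : ∀ x t, G (x, t) = (F x, t - φ t * ψ (‖x‖ ^ 2))) :
    DifferentiableAt ℝ G (x₀, t₀) ∧
      (fderiv ℝ G (x₀, t₀)).det =
        (fderiv ℝ F x₀).det * (1 - deriv φ t₀ * ψ (‖x₀‖ ^ 2)) := by
  obtain rfl : G = fun p => (F p.1, p.2 - φ p.2 * ψ (‖p.1‖ ^ 2)) := funext fun p => hG p.1 p.2
  have hψ_normSq : DifferentiableAt ℝ (fun x => ψ (‖x‖ ^ 2)) x₀ :=
    hψ.comp x₀ (differentiableAt_id.norm_sq ℝ)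
  have hD : HasFDerivAt (fun p => (F p.1, p.2 - φ p.2 * ψ (‖p.1‖ ^ 2))) _ (x₀, t₀) :=
    (hF.hasFDerivAt.comp (x₀, t₀) hasFDerivAt_fst).prodMk
      (hasFDerivAt_snd_sub_mul_comp_fst hψ_normSq.hasFDerivAt hφ.hasDerivAt)
  exact ⟨hD.differentiableAt,
    hD.fderiv ▸ LinearMap.det_prod_comp_fst_add_smul_snd _ _ _⟩
end

section
/- Let m ∈ ℕ, let F : EuclideanSpace ℝ (Fin m) → EuclideanSpace ℝ (Fin m), let φ, ψ : ℝ → ℝ, and let x₀ ∈ EuclideanSpace ℝ (Fin m), t₀ ∈ ℝ. Assume F is differentiable at x₀, φ is differentiable at t₀, ψ is differentiable at ‖x₀‖², and that deriv φ t₀ · ψ (‖x₀‖²) = 1. Define G (x, t) = (F x, t − φ t · ψ (‖x‖²)). Then (x₀, t₀) is a critical point of G: det (fderiv ℝ G (x₀, t₀)) = 0. -/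
/-! The Jacobian of `G` at `(x₀, t₀)` kills `(0, 1)`: moving in `t` alone, `G (x₀, t)` has
velocity `(0, 1 - φ'(t₀) ψ(‖x₀‖²)) = 0`. -/

lemma ContinuousLinearMap.det_eq_zero_of_apply_eq_zero {K E : Type*} [Field K]
    [TopologicalSpace E] [AddCommGroup E] [Module K E] [FiniteDimensional K E]
    (D : E →L[K] E) {v : E} (hv : v ≠ 0) (h : D v = 0) : D.det = 0 :=
  LinearMap.det_eq_zero_iff_ker_ne_bot.mpr <|
    (Submodule.ne_bot_iff _).mpr ⟨v, LinearMap.mem_ker.mpr h, hv⟩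

lemma fderiv_apply_zero_one_eq_deriv {𝕜 E F : Type*} [NontriviallyNormedField 𝕜]
    [NormedAddCommGroup E] [NormedSpace 𝕜 E] [NormedAddCommGroup F] [NormedSpace 𝕜 F]
    {G : E × 𝕜 → F} {x : E} {t : 𝕜} (hG : DifferentiableAt 𝕜 G (x, t)) :
    fderiv 𝕜 G (x, t) (0, 1) = deriv (fun s => G (x, s)) t := by
  have hslice : HasDerivAt (fun s : 𝕜 => (x, s)) ((0 : E), (1 : 𝕜)) t :=
    (hasDerivAt_const t x).prodMk (hasDerivAt_id t)
  exact (hG.hasFDerivAt.comp_hasDerivAt t hslice).deriv.symm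

/-- Existence of critical points for the perturbed map (Lemma 4.2): if
`φ'(t₀) · ψ(‖x₀‖²) = 1`, then `(x₀, t₀)` is a critical point of
`G (x, t) = (F x, t − φ t · ψ (‖x‖²))`, i.e. the determinant of its Jacobian vanishes. -/
theorem critical_point_of_perturbation {m : ℕ}
    (F : EuclideanSpace ℝ (Fin m) → EuclideanSpace ℝ (Fin m))
    (φ ψ : ℝ → ℝ) (x₀ : EuclideanSpace ℝ (Fin m)) (t₀ : ℝ)
    (hF : DifferentiableAt ℝ F x₀) (hφ : DifferentiableAt ℝ φ t₀)
    (hψ : DifferentiableAt ℝ ψ (‖x₀‖ ^ 2))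
    (hcrit : deriv φ t₀ * ψ (‖x₀‖ ^ 2) = 1)
    (G : EuclideanSpace ℝ (Fin m) × ℝ → EuclideanSpace ℝ (Fin m) × ℝ)
    (hG : ∀ x t, G (x, t) = (F x, t - φ t * ψ (‖x‖ ^ 2))) :
    (fderiv ℝ G (x₀, t₀)).det = 0 := by
  have hG_eq : G = fun p => (F p.1, p.2 - φ p.2 * ψ (‖p.1‖ ^ 2)) := by
    funext ⟨x, t⟩; exact hG x t
  have hdiff : DifferentiableAt ℝ G (x₀, t₀) := by
    rw [hG_eq]
    exact (hF.comp (x₀, t₀) differentiableAt_fst).prodMk <| differentiableAt_snd.sub <|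
      (hφ.comp (x₀, t₀) differentiableAt_snd).mul
        (hψ.comp (x₀, t₀) (differentiableAt_fst.norm_sq ℝ))
  have hslice : HasDerivAt (fun t => G (x₀, t)) (0, 1 - deriv φ t₀ * ψ (‖x₀‖ ^ 2)) t₀ := by
    simp only [hG]
    exact (hasDerivAt_const t₀ (F x₀)).prodMk
      ((hasDerivAt_id' t₀).sub (hφ.hasDerivAt.mul_const _))
  refine (fderiv ℝ G (x₀, t₀)).det_eq_zero_of_apply_eq_zero (v := (0, 1)) (by simp) ?_
  rw [fderiv_apply_zero_one_eq_deriv hdiff, hslice.deriv, hcrit, sub_self]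
  rfl
end
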